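/- Fix r∈(0,1), integers N>n≥1, and set w=(N−1/2)/n. Let c be a nonnegative cost function, α>0, and suppose c(x) ≤ β₁x^α for all x≥w, where β₁>0. With c_{n,i} := ∫_{J_{n,i}} n·c(x) dx, one has Σ_{i≥N} c_{n,i} r^{i−N} ≤ β₁·ℓ_α·( w^α/(1−r) + (2(α/e)^α·log(1/r) + Γ(α+1)) / ( r·n^α·(log(1/r))^{α+1} ) ), where ℓ_α := max(1, 2^{α−1}) and Γ is the Gamma function. -/

import Mathlib

open MeasureTheory Filter Real Set
open scoped ENNReal NNReal Classical

noncomputable section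

/-- Shift operator on Borel measures: `(shiftMeasure a μ) B = μ (B - a)`. -/
def shiftMeasure (a : ℝ) (μ : Measure ℝ) : Measure ℝ := μ.map (· + a)

/-- Kullback–Leibler divergence between Borel measures on `ℝ`. -/
def KLdiv (μ ν : Measure ℝ) : ℝ≥0∞ :=
  if μ ≪ ν ∧ Integrable (llr μ ν) μ then ENNReal.ofReal (∫ x, llr μ ν x ∂μ) else ⊤

/-- Standing assumptions on the cost function. -/
structure IsCostFun (c : ℝ → ℝ) (α β : ℝ) : Prop where
  nonneg : ∀ x, 0 ≤ c x
  zero : c 0 = 0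
  even : ∀ x, c (-x) = c x
  mono : ∀ x y : ℝ, |x| ≤ |y| → c x ≤ c y
  continuous : Continuous c
  tail : Tendsto (fun x : ℝ => c x / (β * x ^ α)) atTop (nhds 1)


/-- The interval `J_{n,i}` of length `1/n` centered at `i/n`. -/
def Jset (n : ℕ) (i : ℤ) : Set ℝ :=
  if 0 < i then Set.Ioc (((i : ℝ) - 1/2) / n) (((i : ℝ) + 1/2) / n)
  else if i < 0 then Set.Ico (((i : ℝ) - 1/2) / n) (((i : ℝ) + 1/2) / n)
  else Set.Icc (-(1 / (2 * (n : ℝ)))) (1 / (2 * (n : ℝ)))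

/-!
Each cell `J_{n,N+j}` has length `1/n` and lies in `[w, ∞)`, so by monotonicity of `c` its
cost is at most `c (w + (j+1)/n) ≤ β₁ (w + (j+1)/n)^α ≤ β₁ ℓ_α (w^α + ((j+1)/n)^α)`. Against the
weights `r^j`, the first part sums to `w^α / (1 - r)`. For the second, write `r^k = e^{-tk}` with
`t = log (1/r)`: the function `x^α e^{-tx}` increases up to `α/t` and decreases afterwards, so its
values at the integers are bounded by its integral over `(0, ∞)`, which is `Γ(α+1) / t^(α+1)`,
plus two copies of its maximum `(α/(e t))^α`.
-/

theorem rpow_add_le_max_mul_rpow_add_rpow {a b p : ℝ} (ha : 0 ≤ a) (hb : 0 ≤ b) (hp : 0 ≤ p) :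
    (a + b) ^ p ≤ max 1 (2 ^ (p - 1)) * (a ^ p + b ^ p) := by
  have hsum : 0 ≤ a ^ p + b ^ p := by positivity
  rcases le_total p 1 with hp1 | hp1
  · calc (a + b) ^ p ≤ a ^ p + b ^ p := rpow_add_le_add_rpow ha hb hp hp1
      _ ≤ _ := le_mul_of_one_le_left hsum (le_max_left _ _)
  · lift a to ℝ≥0 using ha
    lift b to ℝ≥0 using hb
    calc ((a : ℝ) + b) ^ p ≤ 2 ^ (p - 1) * (a ^ p + b ^ p) := by
          exact_mod_cast NNReal.rpow_add_le_mul_rpow_add_rpow a b hp1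
      _ ≤ _ := mul_le_mul_of_nonneg_right (le_max_right _ _) hsum

theorem monotoneOn_mul_exp_neg_mul {s : ℝ} (hs : 0 < s) :
    MonotoneOn (fun x => x * exp (-(s * x))) (Icc 0 s⁻¹) := by
  intro x _ y ⟨hy0, hys⟩ hxy
  have hsy : s * y ≤ 1 := (le_inv_mul_iff₀ hs).1 (by rwa [mul_one])
  have hexp := add_one_le_exp (-(s * (y - x)))
  calc x * exp (-(s * x)) ≤ y * exp (-(s * (y - x))) * exp (-(s * x)) := by
        gcongr
        nlinarith [mul_le_mul_of_nonneg_left hexp hy0,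
          mul_nonneg (sub_nonneg.2 hsy) (sub_nonneg.2 hxy)]
    _ = y * exp (-(s * y)) := by rw [mul_assoc, ← exp_add]; ring_nf

theorem antitoneOn_mul_exp_neg_mul {s : ℝ} (hs : 0 < s) :
    AntitoneOn (fun x => x * exp (-(s * x))) (Ici s⁻¹) := by
  intro x hx y _ hxy
  have hsx : 1 ≤ s * x := (inv_le_iff_one_le_mul₀' hs).1 hx
  have hx0 : 0 ≤ x := (inv_pos.2 hs).le.trans hx
  have hexp := add_one_le_exp (s * (y - x))
  calc y * exp (-(s * y)) ≤ x * exp (s * (y - x)) * exp (-(s * y)) := by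
        gcongr
        nlinarith [mul_le_mul_of_nonneg_left hexp hx0,
          mul_nonneg (sub_nonneg.2 hsx) (sub_nonneg.2 hxy)]
    _ = x * exp (-(s * x)) := by rw [mul_assoc, ← exp_add]; ring_nf

theorem rpow_mul_exp_neg_mul_eq_rpow {α t x : ℝ} (hα : α ≠ 0) (hx : 0 ≤ x) :
    x ^ α * exp (-(t * x)) = (x * exp (-(t / α * x))) ^ α := by
  rw [mul_rpow hx (exp_nonneg _), ← exp_mul]
  congr 2
  field_simp

theorem monotoneOn_rpow_mul_exp_neg_mul {α t : ℝ} (hα : 0 < α) (ht : 0 < t) :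
    MonotoneOn (fun x => x ^ α * exp (-(t * x))) (Icc 0 (α / t)) := by
  intro x hx y hy hxy
  simp only [rpow_mul_exp_neg_mul_eq_rpow hα.ne' hx.1, rpow_mul_exp_neg_mul_eq_rpow hα.ne' hy.1]
  rw [← inv_div] at hx hy
  exact rpow_le_rpow (mul_nonneg hx.1 (exp_nonneg _))
    (monotoneOn_mul_exp_neg_mul (by positivity) hx hy hxy) hα.le

theorem antitoneOn_rpow_mul_exp_neg_mul {α t : ℝ} (hα : 0 < α) (ht : 0 < t) :
    AntitoneOn (fun x => x ^ α * exp (-(t * x))) (Ici (α / t)) := by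
  intro x hx y hy hxy
  have hx0 : 0 ≤ x := (div_pos hα ht).le.trans hx
  simp only [rpow_mul_exp_neg_mul_eq_rpow hα.ne' hx0,
    rpow_mul_exp_neg_mul_eq_rpow hα.ne' (hx0.trans hxy)]
  rw [← inv_div] at hx hy
  exact rpow_le_rpow (mul_nonneg (hx0.trans hxy) (exp_nonneg _))
    (antitoneOn_mul_exp_neg_mul (by positivity) hx hy hxy) hα.le

theorem sum_range_le_two_mul_add_integral_Ioi {f : ℝ → ℝ} {m : ℝ} (hm : 0 ≤ m)
    (hf : ∀ x, 0 ≤ x → 0 ≤ f x) (hmono : MonotoneOn f (Icc 0 m)) (hanti : AntitoneOn f (Ici m))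
    (hint : IntegrableOn f (Ioi 0)) (M : ℕ) :
    ∑ k ∈ Finset.range M, f k ≤ 2 * f m + ∫ x in Ioi 0, f x := by
  obtain ⟨p, hpm, hmp⟩ : ∃ p : ℕ, (p : ℝ) ≤ m ∧ m ≤ p + 1 :=
    ⟨⌊m⌋₊, Nat.floor_le hm, (Nat.lt_floor_add_one m).le⟩
  have hpeak : ∀ x, 0 ≤ x → f x ≤ f m := fun x hx =>
    (le_total x m).elim (fun h => hmono ⟨hx, h⟩ (right_mem_Icc.2 hm) h)
      (fun h => hanti self_mem_Ici h h)
  have hii : ∀ a b : ℝ, 0 ≤ a → a ≤ b → IntervalIntegrable f volume a b := fun a b ha hab =>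
    (intervalIntegrable_iff_integrableOn_Ioc_of_le hab).2
      (hint.mono_set fun x hx => ha.trans_lt hx.1)
  have hlow : ∑ k ∈ Finset.range p, f k ≤ ∫ x in (0 : ℝ)..p, f x := by
    simpa using (hmono.mono (Icc_subset_Icc_right (by simpa using hpm))).sum_le_integral
  have hhigh : ∑ i ∈ Finset.range M, f ((p + 1 : ℝ) + (i + 1 : ℕ)) ≤
      ∫ x in (p + 1 : ℝ)..(p + 1) + M, f x :=
    AntitoneOn.sum_le_integral (hanti.mono fun x hx => hmp.trans hx.1)
  have hgap : 0 ≤ ∫ x in (p : ℝ)..p + 1, f x :=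
    intervalIntegral.integral_nonneg (by linarith) fun x hx => hf x (p.cast_nonneg.trans hx.1)
  have htotal : ∫ x in (0 : ℝ)..(p + 1) + M, f x ≤ ∫ x in Ioi 0, f x := by
    rw [intervalIntegral.integral_of_le (by positivity)]
    refine setIntegral_mono_set hint ?_ Ioc_subset_Ioi_self.eventuallyLE
    filter_upwards [ae_restrict_mem measurableSet_Ioi] with x hx using hf x (le_of_lt hx)
  have hsplit : (∫ x in (0 : ℝ)..p, f x) + (∫ x in (p : ℝ)..p + 1, f x) +
      (∫ x in (p + 1 : ℝ)..(p + 1) + M, f x) = ∫ x in (0 : ℝ)..(p + 1) + M, f x := by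
    rw [intervalIntegral.integral_add_adjacent_intervals (hii 0 p le_rfl p.cast_nonneg)
        (hii p (p + 1) p.cast_nonneg (by linarith)),
      intervalIntegral.integral_add_adjacent_intervals (hii 0 (p + 1) le_rfl (by positivity))
        (hii (p + 1) (p + 1 + M) (by positivity) (by simp))]
  calc ∑ k ∈ Finset.range M, f k ≤ ∑ k ∈ Finset.range (p + 2 + M), f k :=
        Finset.sum_le_sum_of_subset_of_nonneg (Finset.range_mono (by omega))
          fun k _ _ => hf k k.cast_nonneg
    _ = ∑ k ∈ Finset.range p, f k + (f p + f (p + 1)) +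
          ∑ i ∈ Finset.range M, f ((p + 1 : ℝ) + (i + 1 : ℕ)) := by
        rw [Finset.sum_range_add, Finset.sum_range_succ, Finset.sum_range_succ]
        push_cast
        ring_nf
    _ ≤ (∫ x in (0 : ℝ)..p, f x) + 2 * f m + ∫ x in (p + 1 : ℝ)..(p + 1) + M, f x := by
        linarith [hpeak p p.cast_nonneg, hpeak (p + 1) (by positivity)]
    _ ≤ 2 * f m + ∫ x in Ioi 0, f x := by linarith

theorem sum_range_rpow_mul_exp_neg_mul_le {α t : ℝ} (hα : 0 < α) (ht : 0 < t) (M : ℕ) :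
    ∑ k ∈ Finset.range M, (k : ℝ) ^ α * exp (-(t * k)) ≤
      (2 * (α / exp 1) ^ α * t + Gamma (α + 1)) / t ^ (α + 1) := by
  have hGamma := integral_rpow_mul_exp_neg_mul_Ioi (a := α + 1) (by linarith) ht
  rw [add_sub_cancel_right] at hGamma
  have hint : IntegrableOn (fun x => x ^ α * exp (-(t * x))) (Ioi 0) :=
    .of_integral_ne_zero (by rw [hGamma]; positivity)
  have hpeak : (α / t) ^ α * exp (-(t * (α / t))) = (α / exp 1) ^ α / t ^ α := by
    rw [mul_div_cancel₀ α ht.ne', exp_neg, ← exp_one_rpow, ← inv_rpow (exp_pos 1).le,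
      ← mul_rpow (by positivity) (by positivity), ← div_rpow (by positivity) ht.le]
    ring_nf
  calc ∑ k ∈ Finset.range M, (k : ℝ) ^ α * exp (-(t * k))
      ≤ 2 * ((α / t) ^ α * exp (-(t * (α / t)))) + ∫ x in Ioi 0, x ^ α * exp (-(t * x)) :=
        sum_range_le_two_mul_add_integral_Ioi (by positivity) (fun x _ => by positivity)
          (monotoneOn_rpow_mul_exp_neg_mul hα ht) (antitoneOn_rpow_mul_exp_neg_mul hα ht) hint M
    _ = _ := by
        rw [hpeak, hGamma, div_rpow zero_le_one ht.le, one_rpow, rpow_add_one ht.ne']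
        field_simp

theorem sum_range_rpow_mul_pow_le {α r : ℝ} (hα : 0 < α) (hr0 : 0 < r) (hr1 : r < 1) (M : ℕ) :
    ∑ k ∈ Finset.range M, (k : ℝ) ^ α * r ^ k ≤
      (2 * (α / exp 1) ^ α * log (1 / r) + Gamma (α + 1)) / log (1 / r) ^ (α + 1) := by
  have hr : ∀ k : ℕ, r ^ k = exp (-(log (1 / r) * k)) := fun k => by
    rw [one_div, log_inv, neg_mul, neg_neg, mul_comm, exp_nat_mul, exp_log hr0]
  simpa only [hr] using
    sum_range_rpow_mul_exp_neg_mul_le hα (log_pos (one_lt_one_div hr0 hr1)) M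

theorem sum_range_add_div_rpow_mul_pow_le {α r w a : ℝ} (hα : 0 < α) (hr0 : 0 < r) (hr1 : r < 1)
    (hw : 0 ≤ w) (ha : 0 < a) (M : ℕ) :
    ∑ j ∈ Finset.range M, (w + (j + 1) / a) ^ α * r ^ j ≤
      max 1 (2 ^ (α - 1)) * (w ^ α / (1 - r) +
        (2 * (α / exp 1) ^ α * log (1 / r) + Gamma (α + 1)) /
          (r * a ^ α * log (1 / r) ^ (α + 1))) := by
  have hgeom : ∑ j ∈ Finset.range M, r ^ j ≤ 1 / (1 - r) := by
    simpa using geom_sum_Ico_le_of_lt_one hr0.le hr1 (m := 0) (n := M)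
  have hshift : ∑ j ∈ Finset.range M, ((j + 1) / a) ^ α * r ^ j =
      (r * a ^ α)⁻¹ * ∑ k ∈ Finset.range (M + 1), (k : ℝ) ^ α * r ^ k := by
    rw [Finset.sum_range_succ', Nat.cast_zero, zero_rpow hα.ne', zero_mul, add_zero,
      Finset.mul_sum]
    refine Finset.sum_congr rfl fun j _ => ?_
    rw [div_rpow (by positivity) ha.le, pow_succ]
    push_cast
    field_simp
  calc ∑ j ∈ Finset.range M, (w + (j + 1) / a) ^ α * r ^ j
      ≤ ∑ j ∈ Finset.range M, max 1 (2 ^ (α - 1)) * (w ^ α + ((j + 1) / a) ^ α) * r ^ j := by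
        gcongr with j
        exact rpow_add_le_max_mul_rpow_add_rpow hw (by positivity) hα.le
    _ = max 1 (2 ^ (α - 1)) * (w ^ α * ∑ j ∈ Finset.range M, r ^ j +
          ∑ j ∈ Finset.range M, ((j + 1) / a) ^ α * r ^ j) := by
        simp only [Finset.mul_sum, ← Finset.sum_add_distrib]
        exact Finset.sum_congr rfl fun j _ => by ring
    _ ≤ max 1 (2 ^ (α - 1)) * (w ^ α * (1 / (1 - r)) + (r * a ^ α)⁻¹ *
          ((2 * (α / exp 1) ^ α * log (1 / r) + Gamma (α + 1)) / log (1 / r) ^ (α + 1))) := by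
        rw [hshift]
        gcongr
        exact sum_range_rpow_mul_pow_le hα hr0 hr1 (M + 1)
    _ = _ := by ring

theorem setLIntegral_Jset_le_of_pos {n : ℕ} {i : ℤ} {c : ℝ → ℝ} (hn : 0 < n) (hi : 0 < i)
    (hcm : ∀ x y : ℝ, |x| ≤ |y| → c x ≤ c y) :
    ∫⁻ x in Jset n i, ENNReal.ofReal (n * c x) ≤ ENNReal.ofReal (c ((i + 1 / 2) / n)) := by
  have hn0 : (0 : ℝ) < n := by exact_mod_cast hn
  have hi0 : (0 : ℝ) < i := by exact_mod_cast hi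
  set a := ((i : ℝ) - 1 / 2) / n
  set b := ((i : ℝ) + 1 / 2) / n
  have hab : -b ≤ a := by
    rw [← neg_div]
    exact div_le_div_of_nonneg_right (by linarith) hn0.le
  rw [Jset, if_pos hi]
  calc ∫⁻ x in Ioc a b, ENNReal.ofReal (n * c x)
      ≤ ∫⁻ _ in Ioc a b, ENNReal.ofReal (n * c b) :=
        setLIntegral_mono' measurableSet_Ioc fun x hx => ENNReal.ofReal_le_ofReal <|
          mul_le_mul_of_nonneg_left
            (hcm x b (abs_le_abs hx.2 (neg_le.2 (hab.trans hx.1.le)))) hn0.le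
    _ = ENNReal.ofReal (n * c b) * ENNReal.ofReal (1 / n) := by
        rw [setLIntegral_const, Real.volume_Ioc]
        congr 2
        ring
    _ = ENNReal.ofReal (c b) := by
        rw [← ENNReal.ofReal_mul' (by positivity)]
        congr 1
        field_simp

theorem cactus_tail_cost_bound_general (n N : ℕ) (hn : 1 ≤ n) (hnN : n < N)
    (r : ℝ) (hr : r ∈ Set.Ioo (0 : ℝ) 1)
    (α β₁ : ℝ) (hα : 0 < α) (hβ₁ : 0 < β₁)
    (c : ℝ → ℝ) (hcm : ∀ x y : ℝ, |x| ≤ |y| → c x ≤ c y)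
    (w : ℝ) (hw : w = ((N : ℝ) - 1/2) / n)
    (hcb : ∀ x : ℝ, w ≤ x → c x ≤ β₁ * x ^ α) :
    (∑' j : ℕ, (∫⁻ x in Jset n ((N : ℤ) + (j : ℤ)), ENNReal.ofReal ((n : ℝ) * c x)) *
        ENNReal.ofReal (r ^ j)) ≤
      ENNReal.ofReal (β₁ * max 1 (2 ^ (α - 1)) *
        (w ^ α / (1 - r) +
          (2 * (α / Real.exp 1) ^ α * Real.log (1 / r) + Real.Gamma (α + 1)) /
            (r * (n : ℝ) ^ α * Real.log (1 / r) ^ (α + 1)))) := by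
  obtain ⟨hr0, hr1⟩ := hr
  have hn0 : (0 : ℝ) < n := by exact_mod_cast hn
  have hw0 : 0 ≤ w := by
    have : (1 : ℝ) ≤ N := by exact_mod_cast hn.trans hnN.le
    rw [hw]
    exact div_nonneg (by linarith) hn0.le
  have hcell : ∀ j : ℕ, ∫⁻ x in Jset n (N + j), ENNReal.ofReal (n * c x) ≤
      ENNReal.ofReal (β₁ * (w + (j + 1) / n) ^ α) := fun j => by
    refine (setLIntegral_Jset_le_of_pos hn (by omega) hcm).trans (ENNReal.ofReal_le_ofReal ?_)
    have hright : (((N + j : ℤ) : ℝ) + 1 / 2) / n = w + (j + 1) / n := by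
      rw [hw]
      push_cast
      ring
    rw [hright]
    exact hcb _ (le_add_of_nonneg_right (by positivity))
  refine ENNReal.tsum_le_of_sum_range_le fun M => ?_
  calc ∑ j ∈ Finset.range M, (∫⁻ x in Jset n (N + j), ENNReal.ofReal (n * c x)) *
        ENNReal.ofReal (r ^ j)
      ≤ ∑ j ∈ Finset.range M, ENNReal.ofReal (β₁ * ((w + (j + 1) / n) ^ α * r ^ j)) := by
        gcongr with j
        rw [← mul_assoc, ENNReal.ofReal_mul (by positivity)]
        gcongr
        exact hcell j
    _ = ENNReal.ofReal (β₁ * ∑ j ∈ Finset.range M, (w + (j + 1) / n) ^ α * r ^ j) := by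
        rw [Finset.mul_sum, ENNReal.ofReal_sum_of_nonneg fun j _ => by positivity]
    _ ≤ _ := by
        rw [mul_assoc]
        gcongr
        exact sum_range_add_div_rpow_mul_pow_le hα hr0 hr1 hw0 hn0 M

/-- Tail cost bound for cactus distributions:
`Σ_{i≥N} c_{n,i} r^{i-N} ≤ β₁ ℓ_α (w^α/(1-r) + (2(α/e)^α log(1/r) + Γ(α+1))/(r n^α (log(1/r))^{α+1}))`. -/
theorem cactus_tail_cost_bound (n N : ℕ) (hn : 1 ≤ n) (hnN : n < N)
    (r : ℝ) (hr : r ∈ Set.Ioo (0 : ℝ) 1)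
    (α β₁ : ℝ) (hα : 0 < α) (hβ₁ : 0 < β₁)
    (c : ℝ → ℝ) (hc0 : ∀ x, 0 ≤ c x) (hcm : ∀ x y : ℝ, |x| ≤ |y| → c x ≤ c y)
    (w : ℝ) (hw : w = ((N : ℝ) - 1/2) / n)
    (hcb : ∀ x : ℝ, w ≤ x → c x ≤ β₁ * x ^ α) :
    (∑' j : ℕ, (∫⁻ x in Jset n ((N : ℤ) + (j : ℤ)), ENNReal.ofReal ((n : ℝ) * c x)) *
        ENNReal.ofReal (r ^ j)) ≤
      ENNReal.ofReal (β₁ * max 1 (2 ^ (α - 1)) *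
        (w ^ α / (1 - r) +
          (2 * (α / Real.exp 1) ^ α * Real.log (1 / r) + Real.Gamma (α + 1)) /
            (r * (n : ℝ) ^ α * Real.log (1 / r) ^ (α + 1)))) :=
  cactus_tail_cost_bound_general n N hn hnN r hr α β₁ hα hβ₁ c hcm w hw hcb

end
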